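/- Phase-offset formula: for N = 2^L and the balanced binary-tree magnitude network with arbitrary split angles, the vector y = V_mag(α) e₁ satisfies y_n = |y_n| · e^{i (π/2) w_n} for each n with y_n ≠ 0, where w_n is the Hamming weight of the L-bit binary representation of n − 1. Equivalently, i^{−w_n} y_n is a nonnegative real number for every n. -/

import Mathlib

open Matrix Complex

/-- Embedded 2×2 splitter: identity on `ℂ^N` except on the (0-based) rows/columns
`{m, n}`, where the principal 2×2 block is `[[cos α, i sin α], [i sin α, cos α]]`. -/
noncomputable def UsubN (N m n : ℕ) (α : ℝ) : Matrix (Fin N) (Fin N) ℂ :=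
  Matrix.of fun u v =>
    if ((u : ℕ) = m ∧ (v : ℕ) = m) ∨ ((u : ℕ) = n ∧ (v : ℕ) = n) then (Real.cos α : ℂ)
    else if ((u : ℕ) = m ∧ (v : ℕ) = n) ∨ ((u : ℕ) = n ∧ (v : ℕ) = m) then
      Complex.I * Real.sin α
    else if u = v then 1 else 0

/-- 0-based entry index of node `(ℓ, i)` (with 1-based `ℓ, i`):
`p(ℓ,i) − 1 = (i−1)·2^{L−ℓ+1}`. -/
def pIdx (L ℓ i : ℕ) : ℕ := (i - 1) * 2 ^ (L + 1 - ℓ)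

/-- 0-based split-partner index of node `(ℓ, i)`: `q(ℓ,i) − 1 = p(ℓ,i) − 1 + 2^{L−ℓ}`. -/
def qIdx (L ℓ i : ℕ) : ℕ := pIdx L ℓ i + 2 ^ (L - ℓ)

/-- Layer matrix `U_ℓ`: the (commuting) product over `i = 1,…,2^{ℓ−1}` of the embedded
splitters `U_{p(ℓ,i), q(ℓ,i)}(α_{ℓ,i})`. -/
noncomputable def layerU (L : ℕ) (α : ℕ → ℕ → ℝ) (ℓ : ℕ) :
    Matrix (Fin (2 ^ L)) (Fin (2 ^ L)) ℂ :=
  (List.ofFn fun i : Fin (2 ^ (ℓ - 1)) =>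
    UsubN (2 ^ L) (pIdx L ℓ ((i : ℕ) + 1)) (qIdx L ℓ ((i : ℕ) + 1)) (α ℓ ((i : ℕ) + 1))).prod

/-- Magnitude-tree unitary `V_mag(α) = U_L · U_{L−1} ⋯ U_1`. -/
noncomputable def Vmag (L : ℕ) (α : ℕ → ℕ → ℝ) :
    Matrix (Fin (2 ^ L)) (Fin (2 ^ L)) ℂ :=
  (List.ofFn fun ℓ : Fin L => layerU L α (L - (ℓ : ℕ))).prod

/-- First standard basis vector `e₁` of `ℂ^N` (0-based index `0`). -/
def e1 (N : ℕ) : Fin N → ℂ := fun j => if (j : ℕ) = 0 then 1 else 0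

/-!
Apply the layers one at a time, starting from `U_1`. Before layer `ℓ` the vector vanishes off
the (0-based) indices divisible by `2^(L-ℓ+1)`. Layer `ℓ` pairs each such index
`p = 2^(L-ℓ)·2j` with the empty index `q = 2^(L-ℓ)·(2j+1)`, which has one more binary digit `1`,
and maps `(y_p, 0)` to `(cos α · y_p, i sin α · y_p)`. As `cos α, sin α ≥ 0` on `[0, π/2]`, every
entry stays a nonnegative multiple of `i ^ w`, where `w` is the binary digit sum of its index.
-/

section Splitter

variable {N : ℕ}

lemma UsubN_mulVec_apply_of_ne (m n : ℕ) (α : ℝ) (x : Fin N → ℂ) {u : Fin N}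
    (hum : (u : ℕ) ≠ m) (hun : (u : ℕ) ≠ n) : (UsubN N m n α *ᵥ x) u = x u := by
  simp [UsubN, mulVec, dotProduct, hum, hun]

lemma UsubN_mulVec_apply_left {m n : Fin N} (hmn : m ≠ n) (α : ℝ) (x : Fin N → ℂ) :
    (UsubN N m n α *ᵥ x) m = Real.cos α * x m + I * Real.sin α * x n := by
  have hmn' := Fin.val_ne_of_ne hmn
  rw [mulVec, dotProduct, Fintype.sum_eq_add m n hmn]
  · simp [UsubN, hmn', hmn'.symm]
  · rintro v ⟨hvm, hvn⟩
    simp [UsubN, hmn', Fin.val_ne_of_ne hvm, Fin.val_ne_of_ne hvn, Ne.symm hvm]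

lemma UsubN_mulVec_apply_right {m n : Fin N} (hmn : m ≠ n) (α : ℝ) (x : Fin N → ℂ) :
    (UsubN N m n α *ᵥ x) n = I * Real.sin α * x m + Real.cos α * x n := by
  have hmn' := Fin.val_ne_of_ne hmn
  rw [mulVec, dotProduct, Fintype.sum_eq_add m n hmn]
  · simp [UsubN, hmn', hmn'.symm]
  · rintro v ⟨hvm, hvn⟩
    simp [UsubN, hmn'.symm, Fin.val_ne_of_ne hvm, Fin.val_ne_of_ne hvn, Ne.symm hvn]

end Splitter

section Phase

variable {N : ℕ}

def IsPhased (w : Fin N → ℕ) (x : Fin N → ℂ) : Prop :=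
  ∀ u, ∃ t : ℝ, 0 ≤ t ∧ x u = t * I ^ w u

lemma IsPhased.UsubN_mulVec {w : Fin N → ℕ} {x : Fin N → ℂ} (hx : IsPhased w x) {m n : Fin N}
    (hmn : m ≠ n) (hxn : x n = 0) (hw : w n = w m + 1) {α : ℝ}
    (hα : α ∈ Set.Icc 0 (Real.pi / 2)) : IsPhased w (UsubN N m n α *ᵥ x) := by
  obtain ⟨t, ht, hxm⟩ := hx m
  intro u
  by_cases hum : u = m
  · subst hum
    refine ⟨Real.cos α * t, mul_nonneg (Real.cos_nonneg_of_mem_Icc ⟨by linarith [hα.1,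
      Real.pi_pos], hα.2⟩) ht, ?_⟩
    rw [UsubN_mulVec_apply_left hmn, hxm, hxn]
    push_cast
    ring
  by_cases hun : u = n
  · subst hun
    refine ⟨Real.sin α * t, mul_nonneg (Real.sin_nonneg_of_nonneg_of_le_pi hα.1 (by linarith
      [hα.2, Real.pi_pos])) ht, ?_⟩
    rw [UsubN_mulVec_apply_right hmn, hxm, hxn, hw, pow_succ]
    push_cast
    ring
  rw [UsubN_mulVec_apply_of_ne _ _ _ _ (Fin.val_ne_of_ne hum) (Fin.val_ne_of_ne hun)]
  exact hx u

end Phase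

section SplitterProd

variable {N n : ℕ}

noncomputable def splitterProd (p q : Fin n → Fin N) (a : Fin n → ℝ) : Matrix (Fin N) (Fin N) ℂ :=
  (List.ofFn fun j => UsubN N (p j) (q j) (a j)).prod

lemma splitterProd_succ (p q : Fin (n + 1) → Fin N) (a : Fin (n + 1) → ℝ) :
    splitterProd p q a =
      UsubN N (p 0) (q 0) (a 0) * splitterProd (p ∘ Fin.succ) (q ∘ Fin.succ) (a ∘ Fin.succ) := by
  rw [splitterProd, List.ofFn_succ, List.prod_cons]
  rfl

lemma splitterProd_mulVec_apply_of_ne (p q : Fin n → Fin N) (a : Fin n → ℝ) (x : Fin N → ℂ)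
    {u : Fin N} (hu : ∀ j, u ≠ p j ∧ u ≠ q j) : (splitterProd p q a *ᵥ x) u = x u := by
  induction n with
  | zero => simp [splitterProd]
  | succ n ih =>
    rw [splitterProd_succ, ← mulVec_mulVec, UsubN_mulVec_apply_of_ne _ _ _ _
      (Fin.val_ne_of_ne (hu 0).1) (Fin.val_ne_of_ne (hu 0).2)]
    exact ih _ _ _ fun j => hu j.succ

lemma IsPhased.splitterProd_mulVec {w : Fin N → ℕ} {x : Fin N → ℂ} (hx : IsPhased w x)
    {p q : Fin n → Fin N} {a : Fin n → ℝ}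
    (hdisj : Pairwise fun i j => p i ≠ p j ∧ p i ≠ q j ∧ q i ≠ p j ∧ q i ≠ q j)
    (hpq : ∀ j, p j ≠ q j) (hxq : ∀ j, x (q j) = 0) (hw : ∀ j, w (q j) = w (p j) + 1)
    (ha : ∀ j, a j ∈ Set.Icc 0 (Real.pi / 2)) : IsPhased w (splitterProd p q a *ᵥ x) := by
  induction n with
  | zero => simpa [splitterProd] using hx
  | succ n ih =>
    rw [splitterProd_succ, ← mulVec_mulVec]
    refine IsPhased.UsubN_mulVec ?_ (hpq 0) ?_ (hw 0) (ha 0)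
    · exact ih (hdisj.comp_of_injective (Fin.succ_injective n)) (fun j => hpq j.succ)
        (fun j => hxq j.succ) (fun j => hw j.succ) fun j => ha j.succ
    · rw [splitterProd_mulVec_apply_of_ne (p ∘ Fin.succ) (q ∘ Fin.succ) _ _
        fun j => (hdisj (Fin.succ_ne_zero j).symm).2.2]
      exact hxq 0

end SplitterProd

lemma digits_two_sum_two_pow_mul (k m : ℕ) :
    (Nat.digits 2 (2 ^ k * m)).sum = (Nat.digits 2 m).sum := by
  rcases m.eq_zero_or_pos with rfl | hm
  · simp
  · simp [Nat.digits_base_pow_mul one_lt_two hm]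

lemma digits_two_sum_two_mul_add_one (m : ℕ) :
    (Nat.digits 2 (2 * m + 1)).sum = (Nat.digits 2 m).sum + 1 := by
  rw [Nat.digits_def' one_lt_two (by omega), show (2 * m + 1) / 2 = m by omega,
    show (2 * m + 1) % 2 = 1 by omega, List.sum_cons, add_comm]

section Tree

variable {L ℓ : ℕ}

lemma pIdx_succ (hℓ : ℓ ≤ L) (j : ℕ) : pIdx L ℓ (j + 1) = 2 ^ (L - ℓ) * (2 * j) := by
  rw [pIdx, Nat.add_sub_cancel, show L + 1 - ℓ = L - ℓ + 1 by omega, pow_succ]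
  ring

lemma qIdx_succ (hℓ : ℓ ≤ L) (j : ℕ) : qIdx L ℓ (j + 1) = 2 ^ (L - ℓ) * (2 * j + 1) := by
  rw [qIdx, pIdx_succ hℓ]
  ring

lemma qIdx_succ_lt (h1 : 1 ≤ ℓ) (hℓ : ℓ ≤ L) {j : ℕ} (hj : j < 2 ^ (ℓ - 1)) :
    qIdx L ℓ (j + 1) < 2 ^ L := by
  rw [qIdx_succ hℓ]
  calc 2 ^ (L - ℓ) * (2 * j + 1) < 2 ^ (L - ℓ) * (2 * 2 ^ (ℓ - 1)) := by gcongr; omega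
    _ = 2 ^ L := by rw [← pow_succ', ← pow_add]; congr 1; omega

lemma layerU_eq_splitterProd (h1 : 1 ≤ ℓ) (hℓ : ℓ ≤ L) (α : ℕ → ℕ → ℝ) :
    layerU L α ℓ = splitterProd
      (fun j => ⟨pIdx L ℓ (j + 1), (Nat.le_add_right _ _).trans_lt (qIdx_succ_lt h1 hℓ j.2)⟩)
      (fun j => ⟨qIdx L ℓ (j + 1), qIdx_succ_lt h1 hℓ j.2⟩) (fun j => α ℓ (j + 1)) :=
  rfl

lemma layerU_mulVec_apply_of_not_dvd (h1 : 1 ≤ ℓ) (hℓ : ℓ ≤ L) (α : ℕ → ℕ → ℝ)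
    (x : Fin (2 ^ L) → ℂ) {u : Fin (2 ^ L)} (hu : ¬ 2 ^ (L - ℓ) ∣ (u : ℕ)) :
    (layerU L α ℓ *ᵥ x) u = x u := by
  rw [layerU_eq_splitterProd h1 hℓ]
  refine splitterProd_mulVec_apply_of_ne _ _ _ _ fun j => ⟨?_, ?_⟩ <;> rintro rfl <;> apply hu
  · exact ⟨_, pIdx_succ hℓ j⟩
  · exact ⟨_, qIdx_succ hℓ j⟩

lemma IsPhased.layerU_mulVec (h1 : 1 ≤ ℓ) (hℓ : ℓ ≤ L) {α : ℕ → ℕ → ℝ}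
    (hα : ∀ i, α ℓ i ∈ Set.Icc 0 (Real.pi / 2)) {x : Fin (2 ^ L) → ℂ}
    (hx : IsPhased (fun u => (Nat.digits 2 u).sum) x)
    (hsupp : ∀ u : Fin (2 ^ L), ¬ 2 ^ (L - ℓ + 1) ∣ (u : ℕ) → x u = 0) :
    IsPhased (fun u => (Nat.digits 2 u).sum) (layerU L α ℓ *ᵥ x) := by
  have hinj := mul_right_injective₀ (pow_ne_zero (L - ℓ) (two_ne_zero (α := ℕ)))
  rw [layerU_eq_splitterProd h1 hℓ]
  refine hx.splitterProd_mulVec ?_ (fun j h => ?_) (fun j => hsupp _ ?_) (fun j => ?_)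
    fun j => hα _
  · intro i j hij
    have hij' : (i : ℕ) ≠ j := Fin.val_ne_of_ne hij
    simp only [ne_eq, Fin.mk.injEq, pIdx_succ hℓ, qIdx_succ hℓ, hinj.eq_iff]
    omega
  · simp only [Fin.mk.injEq, pIdx_succ hℓ, qIdx_succ hℓ, hinj.eq_iff] at h
    omega
  · show ¬ _ ∣ qIdx L ℓ (j + 1)
    rw [qIdx_succ hℓ, pow_succ, Nat.mul_dvd_mul_iff_left (by positivity)]
    omega
  · show (Nat.digits 2 (qIdx L ℓ (j + 1))).sum = (Nat.digits 2 (pIdx L ℓ (j + 1))).sum + 1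
    rw [qIdx_succ hℓ, pIdx_succ hℓ, digits_two_sum_two_pow_mul, digits_two_sum_two_pow_mul,
      digits_two_sum_two_mul_add_one, ← digits_two_sum_two_pow_mul 1 j, pow_one]

lemma ofFn_layerU_prod_succ (α : ℕ → ℕ → ℝ) (k : ℕ) :
    (List.ofFn fun j : Fin (k + 1) => layerU L α (k + 1 - j)).prod =
      layerU L α (k + 1) * (List.ofFn fun j : Fin k => layerU L α (k - j)).prod := by
  simp [List.ofFn_succ]

end Tree

lemma isPhased_ofFn_layerU_prod_mulVec_e1 {L : ℕ} {α : ℕ → ℕ → ℝ}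
    (hα : ∀ ℓ i, α ℓ i ∈ Set.Icc 0 (Real.pi / 2)) {k : ℕ} (hk : k ≤ L) :
    IsPhased (fun u => (Nat.digits 2 u).sum)
        ((List.ofFn fun j : Fin k => layerU L α (k - j)).prod *ᵥ e1 (2 ^ L)) ∧
      ∀ u : Fin (2 ^ L), ¬ 2 ^ (L - k) ∣ (u : ℕ) →
        ((List.ofFn fun j : Fin k => layerU L α (k - j)).prod *ᵥ e1 (2 ^ L)) u = 0 := by
  induction k with
  | zero =>
    refine ⟨fun u => ⟨if (u : ℕ) = 0 then 1 else 0, by positivity, ?_⟩, fun u hu => ?_⟩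
    · by_cases hu : (u : ℕ) = 0 <;> simp [e1, hu]
    · have hu0 : (u : ℕ) ≠ 0 := by rintro h; simp [h] at hu
      simp [e1, hu0]
  | succ k ih =>
    obtain ⟨hphase, hsupp⟩ := ih (by omega)
    rw [ofFn_layerU_prod_succ, ← mulVec_mulVec]
    refine ⟨hphase.layerU_mulVec (by omega) hk (hα _) fun u hu => hsupp u ?_, fun u hu => ?_⟩
    · rwa [show L - k = L - (k + 1) + 1 by omega]
    · rw [layerU_mulVec_apply_of_not_dvd (by omega) hk _ _ hu]
      exact hsupp u fun h => hu ((pow_dvd_pow 2 (by omega)).trans h)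

theorem magnitude_tree_phase_offsets_general (L : ℕ) (α : ℕ → ℕ → ℝ)
    (hα : ∀ ℓ i, α ℓ i ∈ Set.Icc 0 (Real.pi / 2)) :
    ∀ n : Fin (2 ^ L), ∃ t : ℝ, 0 ≤ t ∧
      (Vmag L α).mulVec (e1 (2 ^ L)) n =
        (t : ℂ) * Complex.I ^ ((Nat.digits 2 (n : ℕ)).sum) :=
  (isPhased_ofFn_layerU_prod_mulVec_e1 hα le_rfl).1

theorem magnitude_tree_phase_offsets (L : ℕ) (hL : 1 ≤ L) (α : ℕ → ℕ → ℝ)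
    (hα : ∀ ℓ i, α ℓ i ∈ Set.Icc 0 (Real.pi / 2)) :
    ∀ n : Fin (2 ^ L), ∃ t : ℝ, 0 ≤ t ∧
      (Vmag L α).mulVec (e1 (2 ^ L)) n =
        (t : ℂ) * Complex.I ^ ((Nat.digits 2 (n : ℕ)).sum) :=
  magnitude_tree_phase_offsets_general L α hα
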